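/- Let d, ε, χ, μ be positive real numbers, a := √(μχ²/(2dε(2d+χ))), b ∈ ℝ, and set σ := 2dμ/(2d+χ). Define, for x with a·x + b > 0, ū(x) := sinh(a·x + b)^(−2) and c̄(x) := sinh(a·x + b)^(−2d/χ) (real power of the positive number sinh(a·x+b)). Then for every x with a·x + b > 0: d·ū″(x) − χ·(ū·(log ∘ c̄)′)′(x) = 0 and ε·c̄″(x) − σ·c̄(x) − μ·ū(x)·c̄(x) = 0. In particular σ > 0. -/

import Mathlib

open Real Filter

private lemma aux_affine (a b x : ℝ) : HasDerivAt (fun y : ℝ => a * y + b) a x := by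
  simpa using ((hasDerivAt_id x).const_mul a).add_const b

private lemma aux_sinh_rpow (a b P x : ℝ) (hx : 0 < a * x + b) :
    HasDerivAt (fun y => Real.sinh (a * y + b) ^ P)
      (P * Real.sinh (a * x + b) ^ (P - 1) * (Real.cosh (a * x + b) * a)) x := by
  have h := ((aux_affine a b x).sinh).rpow_const
    (p := P) (Or.inl (Real.sinh_pos_iff.mpr hx).ne')
  convert h using 1
  ring

/-- The hyperbolic-type steady state of the original Keller–Segel system with
`m = 1` corresponds to a positive degradation rate `σ = 2dμ/(2d+χ)`. -/
theorem stmt_15 (d ε χ μ : ℝ) (hd : 0 < d) (hε : 0 < ε) (hχ : 0 < χ) (hμ : 0 < μ)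
    (a : ℝ) (ha : a = Real.sqrt (μ * χ ^ 2 / (2 * d * ε * (2 * d + χ))))
    (b : ℝ) (σ : ℝ) (hσ : σ = 2 * d * μ / (2 * d + χ))
    (ubar cbar : ℝ → ℝ)
    (hu : ubar = fun x => Real.sinh (a * x + b) ^ (-2 : ℝ))
    (hc : cbar = fun x => Real.sinh (a * x + b) ^ (-(2 * d / χ))) :
    (∀ x : ℝ, 0 < a * x + b →
      d * deriv (deriv ubar) x
        - χ * deriv (fun y => ubar y * deriv (fun z => Real.log (cbar z)) y) x = 0 ∧
      ε * deriv (deriv cbar) x - σ * cbar x - μ * ubar x * cbar x = 0) ∧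
    0 < σ := by
  have hden : (0:ℝ) < 2 * d + χ := by linarith
  have ha2 : a ^ 2 = μ * χ ^ 2 / (2 * d * ε * (2 * d + χ)) := by
    rw [ha]; exact Real.sq_sqrt (by positivity)
  constructor
  · intro x hx
    have hU : IsOpen {y : ℝ | 0 < a * y + b} :=
      isOpen_lt continuous_const (by continuity)
    have hmem : {y : ℝ | 0 < a * y + b} ∈ nhds x := hU.mem_nhds hx
    set s := Real.sinh (a * x + b) with hsdef
    set c := Real.cosh (a * x + b) with hcdef
    have hs : 0 < s := Real.sinh_pos_iff.mpr hx
    set p : ℝ := -(2 * d / χ) with hp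
    -- first derivative of ubar
    have hdu : deriv ubar =ᶠ[nhds x]
        (fun y => (-2:ℝ) * Real.sinh (a * y + b) ^ (-3:ℝ) * (Real.cosh (a * y + b) * a)) := by
      filter_upwards [hmem] with y hy
      have h := aux_sinh_rpow a b (-2) y hy
      rw [show ((-2:ℝ) - 1) = (-3:ℝ) by norm_num] at h
      simp only [hu]
      exact h.deriv
    have hG : HasDerivAt
        (fun y => (-2:ℝ) * Real.sinh (a * y + b) ^ (-3:ℝ) * (Real.cosh (a * y + b) * a))
        (((-2) * ((-3) * s ^ (-4:ℝ) * (c * a))) * (c * a)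
          + ((-2) * s ^ (-3:ℝ)) * ((s * a) * a)) x := by
      have h3 := aux_sinh_rpow a b (-3) x hx
      rw [show ((-3:ℝ) - 1) = (-4:ℝ) by norm_num] at h3
      exact (h3.const_mul (-2)).mul ((aux_affine a b x).cosh.mul_const a)
    -- derivative of log ∘ cbar
    have hlc : ∀ y, 0 < a * y + b →
        deriv (fun z => Real.log (cbar z)) y
          = p * ((Real.cosh (a * y + b) * a) / Real.sinh (a * y + b)) := by
      intro y hy
      have hsy : 0 < Real.sinh (a * y + b) := Real.sinh_pos_iff.mpr hy
      have heq : (fun z => Real.log (cbar z)) =ᶠ[nhds y]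
          fun z => p * Real.log (Real.sinh (a * z + b)) := by
        filter_upwards [hU.mem_nhds hy] with z hz
        rw [hc]
        exact Real.log_rpow (Real.sinh_pos_iff.mpr hz) p
      rw [heq.deriv_eq]
      exact (((aux_affine a b y).sinh.log hsy.ne').const_mul p).deriv
    have hm : (fun y => ubar y * deriv (fun z => Real.log (cbar z)) y) =ᶠ[nhds x]
        fun y => (p * a) * (Real.cosh (a * y + b) * Real.sinh (a * y + b) ^ (-3:ℝ)) := by
      filter_upwards [hmem] with y hy
      have hsy : 0 < Real.sinh (a * y + b) := Real.sinh_pos_iff.mpr hy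
      rw [hlc y hy, hu]
      have h3 : Real.sinh (a * y + b) ^ (-3:ℝ)
          = Real.sinh (a * y + b) ^ (-2:ℝ) / Real.sinh (a * y + b) := by
        rw [show (-3:ℝ) = (-2) - 1 by norm_num, Real.rpow_sub hsy, Real.rpow_one]
      rw [h3]
      field_simp
    have hK : HasDerivAt
        (fun y => (p * a) * (Real.cosh (a * y + b) * Real.sinh (a * y + b) ^ (-3:ℝ)))
        ((p * a) * ((s * a) * s ^ (-3:ℝ) + c * ((-3) * s ^ (-4:ℝ) * (c * a)))) x := by
      have h3 := aux_sinh_rpow a b (-3) x hx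
      rw [show ((-3:ℝ) - 1) = (-4:ℝ) by norm_num] at h3
      exact (((aux_affine a b x).cosh.mul h3).const_mul (p * a))
    constructor
    · rw [hdu.deriv_eq, hG.deriv, hm.deriv_eq, hK.deriv, hp]
      field_simp
      ring
    · -- second equation
      have hdc : deriv cbar =ᶠ[nhds x]
          fun y => p * Real.sinh (a * y + b) ^ (p - 1) * (Real.cosh (a * y + b) * a) := by
        filter_upwards [hmem] with y hy
        simp only [hc]
        exact (aux_sinh_rpow a b p y hy).deriv
      have hH : HasDerivAt
          (fun y => p * Real.sinh (a * y + b) ^ (p - 1) * (Real.cosh (a * y + b) * a))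
          ((p * ((p - 1) * s ^ (p - 2) * (c * a))) * (c * a)
            + (p * s ^ (p - 1)) * ((s * a) * a)) x := by
        have h3 := aux_sinh_rpow a b (p - 1) x hx
        rw [show (p - 1 - 1) = p - 2 by ring] at h3
        exact ((h3.const_mul p).mul ((aux_affine a b x).cosh.mul_const a))
      have hE1 : s ^ (p - 1) = s ^ (p - 2) * s := by
        rw [show p - 1 = (p - 2) + 1 by ring, Real.rpow_add_one hs.ne']
      have hE4 : s ^ (-2:ℝ) * s ^ 2 = 1 := by
        rw [← Real.rpow_two, ← Real.rpow_add hs]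
        norm_num
      have hcsq : c ^ 2 = 1 + s ^ 2 := Real.cosh_sq' (a * x + b)
      have hcb : cbar x = s ^ (p - 2) * s ^ 2 := by
        simp only [hc]
        rw [← Real.rpow_two, ← Real.rpow_add hs]
        congr 1
        ring
      have hub : ubar x = s ^ (-2:ℝ) := by simp only [hu]; rfl
      have k1 : ε * (p * (p - 1)) * a ^ 2 = μ := by
        rw [hp, ha2]
        field_simp
        ring
      have k2 : ε * p ^ 2 * a ^ 2 = σ := by
        rw [hp, ha2, hσ]
        field_simp
      rw [hdc.deriv_eq, hH.deriv, hE1, hcb, hub]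
      linear_combination (ε * a ^ 2 * p * (p - 1) * s ^ (p - 2)) * hcsq
        + s ^ (p - 2) * k1 + (s ^ (p - 2) * s ^ 2) * k2
        - (μ * s ^ (p - 2)) * hE4
  · rw [hσ]; positivity
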